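/- (Orthogonality relation for terminating 4W3) Let n be a nonnegative integer and let q, a be complex numbers with q ≠ 0, q not a root of unity, a ≠ q^{-m} for every integer m with 0 ≤ m ≤ 2n. Then ∑_{k=0}^n [(1 - a q^{2k})/(1 - a)] · [(a;q)_k (q^{-n};q)_k / ((q;q)_k (a q^{n+1};q)_k)] q^{nk} = δ_{n,0}, i.e., the sum equals 1 when n = 0 and equals 0 when n ≥ 1. -/
import Mathlib

set_option maxHeartbeats 1000000

/-- The finite q-shifted factorial `(a;q)_k = ∏_{j=0}^{k-1} (1 - a q^j)`. -/
noncomputable def qPoch (a q : ℂ) (k : ℕ) : ℂ := ∏ j ∈ Finset.range k, (1 - a * q ^ j)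

lemma qPoch_zero (a q : ℂ) : qPoch a q 0 = 1 := by simp [qPoch]

lemma qPoch_succ (a q : ℂ) (k : ℕ) :
    qPoch a q (k + 1) = qPoch a q k * (1 - a * q ^ k) := by
  simp [qPoch, Finset.prod_range_succ]

private lemma aux1 (c N d0 d1 e : ℂ) :
    c * N / (d0 * d1 * e) = c / d0 * (N / (d1 * e)) := by ring

private lemma aux2 (x y1 y2 z d1 d2 : ℂ) :
    x / d1 * (y1 * y2 / d2) * z = x * (y1 * y2 * z / (d1 * d2)) := by ring

/-- The orthogonality relation `₄W₃(a; q^{-n}; q, q^n) = δ_{n,0}` for terminating ₄W₃ series. -/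
theorem fourW3_orthogonality (n : ℕ) (q a : ℂ) (hq0 : q ≠ 0)
    (hq1 : ∀ m : ℕ, 0 < m → q ^ m ≠ 1)
    (ha : ∀ m : ℕ, m ≤ 2 * n → a ≠ q ^ (-(m : ℤ))) :
    ∑ k ∈ Finset.range (n + 1), (1 - a * q ^ (2 * k)) / (1 - a) *
        (qPoch a q k * qPoch (q ^ (-(n : ℤ))) q k /
          (qPoch q q k * qPoch (a * q ^ (n + 1)) q k)) * q ^ (n * k)
    = if n = 0 then 1 else 0 := by
  have ha1 : a ≠ 1 := by
    have := ha 0 (by omega); simpa using this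
  have ha0 : (1 : ℂ) - a ≠ 0 := sub_ne_zero.mpr (Ne.symm ha1)
  have hqq : ∀ k : ℕ, qPoch q q k ≠ 0 := by
    intro k
    unfold qPoch
    rw [Finset.prod_ne_zero_iff]
    intro j _
    have h1 := hq1 (j + 1) (by omega)
    intro h
    apply h1
    have : q * q ^ j = 1 := by linear_combination -h
    rw [pow_succ, mul_comm]; exact this
  have hfac : ∀ m : ℕ, m ≤ 2 * n → (1 : ℂ) - a * q ^ m ≠ 0 := by
    intro m hm h
    apply ha m hm
    have h1 : a * q ^ m = 1 := by linear_combination -h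
    have hqm : q ^ m ≠ 0 := pow_ne_zero _ hq0
    have : a = (q ^ m)⁻¹ := by
      field_simp
      linear_combination h1
    rw [this, zpow_neg, zpow_natCast]
  have haq : ∀ k : ℕ, k ≤ n → qPoch (a * q ^ (n + 1)) q k ≠ 0 := by
    intro k hk
    unfold qPoch
    rw [Finset.prod_ne_zero_iff]
    intro j hj
    have hj' : j < k := Finset.mem_range.mp hj
    have := hfac (n + 1 + j) (by omega)
    intro h
    apply this
    rw [← h]; ring
  rcases Nat.eq_zero_or_pos n with h0 | hn
  · subst h0
    rw [if_pos rfl, Finset.sum_range_one]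
    simp [qPoch_zero, div_self ha0]
  · rw [if_neg hn.ne']
    have hqn : (1 : ℂ) - q ^ n ≠ 0 := sub_ne_zero.mpr (Ne.symm (hq1 n hn))
    have hc : q ^ (-(n : ℤ)) * q ^ n = 1 := by
      rw [← zpow_natCast q n, ← zpow_add₀ hq0]
      simp
    have hW : ∀ k : ℕ, qPoch (q ^ (-(n : ℤ))) q k * q ^ (n * k)
        = ∏ j ∈ Finset.range k, (q ^ n - q ^ j) := by
      intro k
      rw [pow_mul, ← Finset.card_range k, ← Finset.prod_const, Finset.card_range]
      unfold qPoch
      rw [← Finset.prod_mul_distrib]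
      refine Finset.prod_congr rfl fun j _ => ?_
      linear_combination (-(q : ℂ) ^ j) * hc
    -- base quantity
    let W : ℕ → ℂ := fun k => ∏ j ∈ Finset.range k, (q ^ n - q ^ j)
    have hWsucc : ∀ k : ℕ, W (k + 1) = W k * (q ^ n - q ^ k) :=
      fun k => Finset.prod_range_succ _ k
    let B : ℕ → ℂ := fun k => qPoch a q k * W k /
      ((1 - a) * (qPoch q q k * qPoch (a * q ^ (n + 1)) q k))
    let V : ℕ → ℂ := fun k =>
      (1 - q ^ k) * (1 - a * q ^ (n + k)) * (qPoch a q k * W k) /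
        ((1 - q ^ n) * (1 - a) * (qPoch q q k * qPoch (a * q ^ (n + 1)) q k))
    have hV1 : ∀ k : ℕ, V k = (1 - q ^ k) * (1 - a * q ^ (n + k)) / (1 - q ^ n) * B k := by
      intro k
      show (1 - q ^ k) * (1 - a * q ^ (n + k)) * (qPoch a q k * W k) /
        ((1 - q ^ n) * (1 - a) * (qPoch q q k * qPoch (a * q ^ (n + 1)) q k))
        = (1 - q ^ k) * (1 - a * q ^ (n + k)) / (1 - q ^ n) *
          (qPoch a q k * W k / ((1 - a) * (qPoch q q k * qPoch (a * q ^ (n + 1)) q k)))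
      exact aux1 _ _ _ _ _
    have hV2 : ∀ k : ℕ, k ≤ n →
        V (k + 1) = (1 - a * q ^ k) * (q ^ n - q ^ k) / (1 - q ^ n) * B k := by
      intro k hk
      have h1 := hqq k
      have h2 := haq k hk
      have h3 : (1 : ℂ) - q ^ (k + 1) ≠ 0 :=
        sub_ne_zero.mpr (Ne.symm (hq1 (k + 1) (by omega)))
      show (1 - q ^ (k + 1)) * (1 - a * q ^ (n + (k + 1))) *
          (qPoch a q (k + 1) * W (k + 1)) /
        ((1 - q ^ n) * (1 - a) * (qPoch q q (k + 1) * qPoch (a * q ^ (n + 1)) q (k + 1)))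
        = (1 - a * q ^ k) * (q ^ n - q ^ k) / (1 - q ^ n) *
          (qPoch a q k * W k / ((1 - a) * (qPoch q q k * qPoch (a * q ^ (n + 1)) q k)))
      rcases eq_or_lt_of_le hk with h | hlt
      · -- k = n : both sides vanish
        rw [hWsucc, h]
        simp
      · have h4 : (1 : ℂ) - a * q ^ (n + 1) * q ^ k ≠ 0 := by
          have := hfac (n + 1 + k) (by omega)
          intro h; apply this; rw [← h]; ring
        have h3' : (1 : ℂ) - q * q ^ k ≠ 0 := by
          rw [← pow_succ']; exact h3
        rw [qPoch_succ, qPoch_succ, qPoch_succ, hWsucc]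
        have hnk1 : (1 : ℂ) - a * q ^ (n + (k + 1)) = 1 - a * q ^ (n + 1) * q ^ k := by
          rw [show n + (k + 1) = (n + 1) + k by omega, pow_add]; ring
        have hD1 : (1 - q ^ n) * (1 - a) *
            (qPoch q q k * (1 - q * q ^ k) *
              (qPoch (a * q ^ (n + 1)) q k * (1 - a * q ^ (n + 1) * q ^ k))) ≠ 0 :=
          mul_ne_zero (mul_ne_zero hqn ha0)
            (mul_ne_zero (mul_ne_zero h1 h3') (mul_ne_zero h2 h4))
        have hD2 : (1 - q ^ n) * ((1 - a) * (qPoch q q k * qPoch (a * q ^ (n + 1)) q k)) ≠ 0 :=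
          mul_ne_zero hqn (mul_ne_zero ha0 (mul_ne_zero h1 h2))
        rw [hnk1, div_mul_div_comm, div_eq_div_iff hD1 hD2]
        ring
    have hstep : ∀ k ∈ Finset.range (n + 1),
        (1 - a * q ^ (2 * k)) / (1 - a) *
          (qPoch a q k * qPoch (q ^ (-(n : ℤ))) q k /
            (qPoch q q k * qPoch (a * q ^ (n + 1)) q k)) * q ^ (n * k)
        = V k - V (k + 1) := by
      intro k hk
      have hk' : k ≤ n := by have := Finset.mem_range.mp hk; omega
      have hf : (1 - a * q ^ (2 * k)) / (1 - a) *
          (qPoch a q k * qPoch (q ^ (-(n : ℤ))) q k /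
            (qPoch q q k * qPoch (a * q ^ (n + 1)) q k)) * q ^ (n * k)
          = (1 - a * q ^ (2 * k)) * B k := by
        show _ = (1 - a * q ^ (2 * k)) *
          (qPoch a q k * W k / ((1 - a) * (qPoch q q k * qPoch (a * q ^ (n + 1)) q k)))
        rw [show (W k : ℂ) = qPoch (q ^ (-(n : ℤ))) q k * q ^ (n * k) from (hW k).symm,
          ← mul_assoc (qPoch a q k)]
        exact aux2 _ _ _ _ _ _
      rw [hf, hV1 k, hV2 k hk']
      have key : ∀ x : ℂ, (1 - a * q ^ (2 * k)) * x
          = (1 - q ^ k) * (1 - a * q ^ (n + k)) / (1 - q ^ n) * x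
            - (1 - a * q ^ k) * (q ^ n - q ^ k) / (1 - q ^ n) * x := by
        intro x
        rw [div_mul_eq_mul_div, div_mul_eq_mul_div, div_sub_div_same]
        rw [eq_div_iff hqn]
        ring
      exact key (B k)
    rw [Finset.sum_congr rfl hstep, Finset.sum_range_sub' V]
    have hV0 : V 0 = 0 := by
      show (1 - q ^ 0) * _ * _ / _ = 0
      simp
    have hVn : V (n + 1) = 0 := by
      have hWz : W (n + 1) = 0 := by rw [hWsucc]; simp
      show (1 - q ^ (n + 1)) * (1 - a * q ^ (n + (n + 1))) *
          (qPoch a q (n + 1) * W (n + 1)) / _ = 0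
      rw [hWz]
      simp
    rw [hV0, hVn, sub_zero]
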